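/- With K analytic in r^{-1} ≤ |z| ≤ r (r > 1) and K_n its symmetrically truncated order-n Laurent expansion, the modified trapezoidal rule is exact for the Laurent monomials: T_{2n}(K_n u) = I(K u) whenever u(z) = z^k with −n+1 ≤ k ≤ n−1, and also when u(z) = z^n + z^{−n}. -/

import Mathlib

/-!
The nodes `e^{πik/n}` are the `2n`-th roots of unity, so by discrete orthogonality
`T_{2n}(z^m) = 2π` when `2n ∣ m` and `0` otherwise, while `I(K z^m) = 2π c_{-m}`.
For `|k| < n` the only term of `K_n z^k` with exponent divisible by `2n` is `c_{-k} z^0`.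
For `k = ±n` both half-weighted end terms alias (exponents `0` and `±2n`), giving
`π (c_{-n} + c_n)` for each of `z^n` and `z^{-n}`, which adds up to `I(K (z^n + z^{-n}))`.
-/

open scoped Real
open Complex intervalIntegral

/-- The modified trapezoidal rule node sum `T_{2n}(v) = (π/n) ∑_{k=1}^{2n} v(e^{πik/n})`. -/
noncomputable def trap2 (n : ℕ) (v : ℂ → ℂ) : ℂ :=
  ((π / n : ℝ) : ℂ) * ∑ k ∈ Finset.range (2 * n),
    v (Complex.exp (π * Complex.I * ((k : ℂ) + 1) / n))

/-- Truncated symmetric Laurent expansion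
`K_n(z) = (1/2)c_{−n} z^{−n} + ∑_{−n<k<n} c_k z^k + (1/2)c_n z^n`. -/
noncomputable def laurentTrunc (c : ℤ → ℂ) (n : ℕ) (z : ℂ) : ℂ :=
  (1 / 2) * c (-(n : ℤ)) * z ^ (-(n : ℤ))
    + ∑ k ∈ Finset.Ioo (-(n : ℤ)) (n : ℤ), c k * z ^ k
    + (1 / 2) * c (n : ℤ) * z ^ (n : ℤ)

theorem geom_sum_eq_zero_of_pow_eq_one {R : Type*} [CommRing R] [IsDomain R] {w : R} {N : ℕ}
    (hw : w ^ N = 1) (hw1 : w ≠ 1) : ∑ i ∈ Finset.range N, w ^ i = 0 :=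
  eq_zero_of_ne_zero_of_mul_left_eq_zero (sub_ne_zero_of_ne hw1.symm)
    (by rw [mul_neg_geom_sum, hw, sub_self])

theorem sum_range_pow_succ_of_pow_eq_one {R : Type*} [CommRing R] [IsDomain R] [DecidableEq R]
    {w : R} {N : ℕ} (hw : w ^ N = 1) : ∑ i ∈ Finset.range N, w ^ (i + 1) = if w = 1 then (N : R) else 0 := by
  split_ifs with hw1
  · simp [hw1]
  · simp only [pow_succ', ← Finset.mul_sum, geom_sum_eq_zero_of_pow_eq_one hw hw1, mul_zero]

section

variable {n : ℕ}

theorem trap2_congr {v w : ℂ → ℂ} (h : ∀ z : ℂ, z ≠ 0 → v z = w z) :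
    trap2 n v = trap2 n w :=
  congrArg (_ * ·) (Finset.sum_congr rfl fun _ _ => h _ (exp_ne_zero _))

theorem trap2_add (v w : ℂ → ℂ) : trap2 n (fun z => v z + w z) = trap2 n v + trap2 n w := by
  simp only [trap2, Finset.sum_add_distrib, mul_add]

theorem trap2_const_mul (a : ℂ) (v : ℂ → ℂ) : trap2 n (fun z => a * v z) = a * trap2 n v := by
  simp only [trap2, ← Finset.mul_sum]; ring

theorem trap2_sum {ι : Type*} (s : Finset ι) (f : ι → ℂ → ℂ) :
    trap2 n (fun z => ∑ i ∈ s, f i z) = ∑ i ∈ s, trap2 n (f i) := by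
  simp only [trap2]; rw [Finset.sum_comm, Finset.mul_sum]

end

theorem exp_pi_mul_I_div_eq_pow {n : ℕ} (hn : n ≠ 0) (k : ℕ) :
    exp (π * I * ((k : ℂ) + 1) / n) = exp (2 * π * I / ↑(2 * n)) ^ (k + 1) := by
  rw [← exp_nat_mul]; congr 1; push_cast; field_simp

theorem trap2_zpow {n : ℕ} (hn : n ≠ 0) (m : ℤ) :
    trap2 n (· ^ m) = if (2 * n : ℤ) ∣ m then ((2 * π : ℝ) : ℂ) else 0 := by
  have hζ := isPrimitiveRoot_exp (2 * n) (by omega)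
  set ζ := exp (2 * π * I / ↑(2 * n))
  have hnode : ∀ k : ℕ, exp (π * I * ((k : ℂ) + 1) / n) ^ m = (ζ ^ m) ^ (k + 1) := fun k => by
    rw [exp_pi_mul_I_div_eq_pow hn, ← zpow_natCast, ← zpow_natCast, ← zpow_mul, ← zpow_mul,
      mul_comm m]
  have hpow : (ζ ^ m) ^ (2 * n) = 1 := by
    rw [← zpow_natCast, ← zpow_mul, mul_comm, zpow_mul, zpow_natCast, hζ.pow_eq_one, one_zpow]
  simp only [trap2, hnode, sum_range_pow_succ_of_pow_eq_one hpow, hζ.zpow_eq_one_iff_dvd]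
  push_cast
  split_ifs
  · field_simp
  · rw [mul_zero]

theorem trap2_zpow_of_dvd {n : ℕ} (hn : n ≠ 0) {m : ℤ} (hm : (2 * n : ℤ) ∣ m) :
    trap2 n (· ^ m) = ((2 * π : ℝ) : ℂ) := by
  rw [trap2_zpow hn, if_pos hm]

theorem trap2_zpow_eq_zero {n : ℕ} {m : ℤ} (hm0 : m ≠ 0) (hm : |m| < 2 * n) :
    trap2 n (· ^ m) = 0 := by
  have hn : n ≠ 0 := by have := (abs_nonneg m).trans_lt hm; omega
  rw [trap2_zpow hn, if_neg fun hdvd => hm.not_ge (Int.le_of_dvd (abs_pos.mpr hm0)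
    ((dvd_abs _ _).mpr hdvd))]

theorem trap2_laurentTrunc_mul_zpow (c : ℤ → ℂ) (n : ℕ) (j : ℤ) :
    trap2 n (fun z => laurentTrunc c n z * z ^ j)
      = 1 / 2 * c (-n) * trap2 n (· ^ (-n + j))
        + ∑ m ∈ Finset.Ioo (-(n : ℤ)) n, c m * trap2 n (· ^ (m + j))
        + 1 / 2 * c n * trap2 n (· ^ (n + j)) := by
  rw [trap2_congr (w := fun z => 1 / 2 * c (-n) * z ^ (-n + j)
      + ∑ m ∈ Finset.Ioo (-(n : ℤ)) n, c m * z ^ (m + j) + 1 / 2 * c n * z ^ (n + j))]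
  · simp only [trap2_add, trap2_const_mul, trap2_sum]
  · intro z hz
    simp only [laurentTrunc, add_mul, Finset.sum_mul, mul_assoc, zpow_add₀ hz]

theorem trap2_laurentTrunc_mul_zpow_of_abs_lt (c : ℤ → ℂ) {n : ℕ} {j : ℤ} (hj : |j| < n) :
    trap2 n (fun z => laurentTrunc c n z * z ^ j) = ((2 * π : ℝ) : ℂ) * c (-j) := by
  rw [abs_lt] at hj
  have hmem : -j ∈ Finset.Ioo (-(n : ℤ)) n := Finset.mem_Ioo.mpr ⟨by omega, by omega⟩
  rw [trap2_laurentTrunc_mul_zpow, Finset.sum_eq_single_of_mem (-j) hmem, neg_add_cancel,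
    trap2_zpow_of_dvd (by omega) (dvd_zero _),
    trap2_zpow_eq_zero (m := -n + j) (by omega) (by rw [abs_lt]; omega),
    trap2_zpow_eq_zero (m := n + j) (by omega) (by rw [abs_lt]; omega)]
  · ring
  · intro m hm hne
    rw [Finset.mem_Ioo] at hm
    rw [trap2_zpow_eq_zero (by omega) (by rw [abs_lt]; omega), mul_zero]

theorem trap2_laurentTrunc_mul_zpow_of_abs_eq (c : ℤ → ℂ) {n : ℕ} (hn : n ≠ 0) {j : ℤ}
    (hj : |j| = n) :
    trap2 n (fun z => laurentTrunc c n z * z ^ j) = π * (c (-n) + c n) := by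
  have hj' := abs_eq (Int.natCast_nonneg n) |>.mp hj
  have hends : (2 * n : ℤ) ∣ -n + j ∧ (2 * n : ℤ) ∣ n + j := by
    rcases hj' with rfl | rfl
    · exact ⟨⟨0, by ring⟩, ⟨1, by ring⟩⟩
    · exact ⟨⟨-1, by ring⟩, ⟨0, by ring⟩⟩
  rw [trap2_laurentTrunc_mul_zpow, trap2_zpow_of_dvd hn hends.1, trap2_zpow_of_dvd hn hends.2,
    Finset.sum_eq_zero]
  · push_cast; ring
  · intro m hm
    rw [Finset.mem_Ioo] at hm
    rw [trap2_zpow_eq_zero (by omega) (by rw [abs_lt]; omega), mul_zero]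

theorem integral_mul_exp_zpow {K : ℂ → ℂ} {c : ℤ → ℂ}
    (hc : ∀ k : ℤ, c k = (1 / (2 * π)) *
      ∫ t in (0:ℝ)..(2 * π), K (exp (I * t)) * exp (-I * k * t)) (m : ℤ) :
    ∫ t in (0:ℝ)..(2 * π), K (exp (I * t)) * exp (I * t) ^ m = ((2 * π : ℝ) : ℂ) * c (-m) := by
  have hexp : ∀ t : ℝ, exp (I * t) ^ m = exp (-I * ↑(-m) * t) := fun t => by
    rw [← exp_int_mul]; push_cast; ring_nf
  have h2π : ((2 * π : ℝ) : ℂ) * (1 / (2 * π)) = 1 := by push_cast; field_simp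
  simp only [hexp]
  rw [hc (-m), ← mul_assoc, h2π, one_mul]

theorem intervalIntegrable_mul_exp_zpow {K : ℂ → ℂ} (hK : ContinuousOn K (Metric.sphere 0 1))
    (m : ℤ) : IntervalIntegrable (fun t : ℝ => K (exp (I * t)) * exp (I * t) ^ m)
      MeasureTheory.volume 0 (2 * π) := by
  have hcirc : Continuous fun t : ℝ => exp (I * t) := by fun_prop
  have hK' : Continuous fun t : ℝ => K (exp (I * t)) :=
    hK.comp_continuous hcirc fun t => by simp [mul_comm I]
  exact (hK'.mul (hcirc.zpow₀ m fun t => .inl (exp_ne_zero _))).intervalIntegrable _ _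

/-- the modified trapezoidal rule is exact for Laurent monomials
`u(z) = z^k`, `−n+1 ≤ k ≤ n−1`, and for `u(z) = z^n + z^{−n}`. -/
theorem modified_trapezoidal_exactness
    (r : ℝ) (hr : 1 < r) (K : ℂ → ℂ)
    (hK : AnalyticOnNhd ℂ K {z : ℂ | r⁻¹ ≤ ‖z‖ ∧ ‖z‖ ≤ r})
    (c : ℤ → ℂ)
    (hc : ∀ k : ℤ, c k = (1 / (2 * π)) *
      ∫ t in (0:ℝ)..(2 * π),
        K (Complex.exp (Complex.I * t)) * Complex.exp (-Complex.I * k * t))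
    (n : ℕ) (hn : 1 ≤ n) :
    (∀ k : ℤ, -(n : ℤ) + 1 ≤ k → k ≤ (n : ℤ) - 1 →
      trap2 n (fun z => laurentTrunc c n z * z ^ k)
        = ∫ t in (0:ℝ)..(2 * π),
            K (Complex.exp (Complex.I * t)) * Complex.exp (Complex.I * t) ^ k) ∧
    trap2 n (fun z => laurentTrunc c n z * (z ^ (n : ℤ) + z ^ (-(n : ℤ))))
      = ∫ t in (0:ℝ)..(2 * π),
          K (Complex.exp (Complex.I * t)) *
            (Complex.exp (Complex.I * t) ^ (n : ℤ)
              + Complex.exp (Complex.I * t) ^ (-(n : ℤ))) := by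
  have hsphere : Metric.sphere (0 : ℂ) 1 ⊆ {z : ℂ | r⁻¹ ≤ ‖z‖ ∧ ‖z‖ ≤ r} := fun z hz => by
    rw [mem_sphere_zero_iff_norm] at hz
    exact ⟨hz ▸ inv_le_one_of_one_le₀ hr.le, hz ▸ hr.le⟩
  have hint := intervalIntegrable_mul_exp_zpow (hK.continuousOn.mono hsphere)
  refine ⟨fun k hk₁ hk₂ => ?_, ?_⟩
  · rw [trap2_laurentTrunc_mul_zpow_of_abs_lt c (by rw [abs_lt]; omega),
      integral_mul_exp_zpow hc]
  · simp only [mul_add]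
    rw [trap2_add, integral_add (hint _) (hint _), integral_mul_exp_zpow hc,
      integral_mul_exp_zpow hc, neg_neg,
      trap2_laurentTrunc_mul_zpow_of_abs_eq c (by omega) (abs_of_nonneg (by positivity)),
      trap2_laurentTrunc_mul_zpow_of_abs_eq c (by omega) (by simp)]
    push_cast; ring
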